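/- arXiv:2011.14401 — 2 statements merged into one kernel-verified Lean document; each statement's English description precedes it below -/
import Mathlib

section
/- (Siegel's lemma) Let s > r > 0 be integers and T an r × s matrix with integer entries all bounded in absolute value by b ≥ 1. Then there exists a nonzero vector v ∈ Z^s with Tv = 0 and with all entries of v bounded in absolute value by 2(2sb)^{r/(s-r)}. -/
attribute [local instance] Matrix.seminormedAddCommGroup

theorem siegel_lemma (r s : ℕ) (hr : 0 < r) (hrs : r < s) (b : ℝ) (hb : 1 ≤ b)
    (T : Matrix (Fin r) (Fin s) ℤ) (hT : ∀ i j, (|T i j| : ℝ) ≤ b) :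
    ∃ v : Fin s → ℤ, v ≠ 0 ∧ T.mulVec v = 0 ∧
      ∀ j, (|v j| : ℝ) ≤ 2 * (2 * s * b) ^ ((r : ℝ) / ((s : ℝ) - (r : ℝ))) := by
  have hcard : Fintype.card (Fin r) < Fintype.card (Fin s) := by simpa using hrs
  have hpos : 0 < Fintype.card (Fin r) := by simpa using hr
  obtain ⟨t, ht0, htA, htn⟩ := Int.Matrix.exists_ne_zero_int_vec_norm_le T hcard hpos
  refine ⟨t, ht0, htA, fun j => ?_⟩
  simp only [Fintype.card_fin] at htn
  have hAb : ‖T‖ ≤ b := by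
    rw [Matrix.norm_le_iff (le_trans zero_le_one hb)]
    intro i j
    simpa [Int.norm_eq_abs] using hT i j
  have hmax : max 1 ‖T‖ ≤ b := max_le hb hAb
  have hs1 : (1 : ℝ) ≤ s := by exact_mod_cast Nat.one_le_of_lt hrs
  have hbase : (s : ℝ) * max 1 ‖T‖ ≤ 2 * s * b := by
    nlinarith [le_max_left (1:ℝ) ‖T‖]
  have hexp : (0 : ℝ) ≤ (r : ℝ) / ((s : ℝ) - r) := by
    apply div_nonneg (by positivity)
    have : (r : ℝ) < s := by exact_mod_cast hrs
    linarith
  have hpow : ((s : ℝ) * max 1 ‖T‖) ^ ((r : ℝ) / ((s : ℝ) - r)) ≤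
      (2 * s * b) ^ ((r : ℝ) / ((s : ℝ) - r)) := by
    apply Real.rpow_le_rpow (by positivity) hbase hexp
  have htj : (|t j| : ℝ) ≤ ‖t‖ := by
    simpa [Int.norm_eq_abs] using norm_le_pi_norm t j
  have h2 : (0 : ℝ) ≤ (2 * s * b) ^ ((r : ℝ) / ((s : ℝ) - r)) := by positivity
  calc (|t j| : ℝ) ≤ ‖t‖ := htj
    _ ≤ ((s : ℝ) * max 1 ‖T‖) ^ ((r : ℝ) / ((s : ℝ) - r)) := htn
    _ ≤ (2 * s * b) ^ ((r : ℝ) / ((s : ℝ) - r)) := hpow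
    _ ≤ 2 * (2 * s * b) ^ ((r : ℝ) / ((s : ℝ) - r)) := by linarith
end

section
/- The set { (e^{2πi·a/c}, c) ∈ C × C : a, c ∈ Z, gcd(a,c) = 1 } is Zariski-dense in A²_C: any polynomial P ∈ C[x,y] vanishing at (e^{2πi a/c}, c) for all coprime integer pairs (a,c) is the zero polynomial. -/
/-!
For a prime `p`, the numbers `exp (2πi a / p)` with `1 ≤ a < p` are `p - 1` distinct zeros of
`P(·, p)`, so `P(·, p)` vanishes identically as soon as `p - 1` exceeds the degree of `P` in `x`.
Thus `P` vanishes on `ℂ × {infinitely many primes}`, which contains grids `S₀ × S₁` with each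
`Sᵢ` larger than the degree of `P` in the `i`-th variable, and a polynomial vanishing on such a
grid is zero.
-/

open Complex Finset

namespace MvPolynomial

variable {R : Type*} [CommRing R] [IsDomain R]

theorem eval_cons_eq_zero_of_card_lt {n : ℕ} (P : MvPolynomial (Fin (n + 1)) R)
    (y : Fin n → R) (s : Finset R) (hcard : P.degreeOf 0 < #s)
    (hs : ∀ x ∈ s, eval (Fin.cons x y) P = 0) (x : R) :
    eval (Fin.cons x y) P = 0 := by
  have hfiber : Polynomial.map (eval y) (finSuccEquiv R n P) = 0 := by
    refine Polynomial.eq_zero_of_natDegree_lt_card_of_eval_eq_zero' _ s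
      (fun x hx => by rw [← eval_eq_eval_mv_eval']; exact hs x hx) ?_
    exact (Polynomial.natDegree_map_le).trans_lt ((natDegree_finSuccEquiv P).symm ▸ hcard)
  rw [eval_eq_eval_mv_eval', hfiber, Polynomial.eval_zero]

theorem eq_zero_of_infinite_fibers (P : MvPolynomial (Fin 2) R) (Y : Set R) (hY : Y.Infinite)
    (hfibers : ∀ y ∈ Y, ∃ s : Finset R, P.degreeOf 0 < #s ∧ ∀ x ∈ s, eval ![x, y] P = 0) :
    P = 0 := by
  have : Infinite R := hY.to_subtype.of_injective _ Subtype.val_injective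
  obtain ⟨S₀, hS₀⟩ := Infinite.exists_subset_card_eq R (P.degreeOf 0 + 1)
  obtain ⟨S₁, hS₁Y, hS₁⟩ := hY.exists_subset_card_eq (P.degreeOf 1 + 1)
  refine eq_zero_of_eval_zero_at_prod_finset P ![S₀, S₁] (fun i => ?_) (fun x hx => ?_)
  · fin_cases i <;> simp [hS₀, hS₁]
  · obtain ⟨s, hcard, hs⟩ := hfibers (x 1) (hS₁Y (by simpa using hx 1))
    have hx_eq : x = Fin.cons (x 0) ![x 1] := by
      ext i; fin_cases i <;> rfl
    rw [hx_eq]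
    exact eval_cons_eq_zero_of_card_lt P ![x 1] s hcard hs (x 0)

end MvPolynomial

theorem Complex.card_image_exp_two_pi_I_mul_div_Ico {n : ℕ} (hn : n ≠ 0) :
    #((Ico 1 n).image fun a : ℕ => exp (2 * Real.pi * I * a / n)) = n - 1 := by
  have hpow (a : ℕ) : exp (2 * Real.pi * I * a / n) = exp (2 * Real.pi * I / n) ^ a := by
    rw [← exp_nat_mul]; ring_nf
  simp only [hpow]
  rw [card_image_of_injOn, Nat.card_Ico]
  intro a ha b hb hab
  exact (isPrimitiveRoot_exp n hn).pow_inj (mem_Ico.1 ha).2 (mem_Ico.1 hb).2 hab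

theorem roots_of_unity_graph_zariski_dense (P : MvPolynomial (Fin 2) ℂ)
    (h : ∀ a c : ℤ, IsCoprime a c →
      MvPolynomial.eval ![Complex.exp (2 * Real.pi * Complex.I * a / c), (c : ℂ)] P = 0) :
    P = 0 := by
  refine P.eq_zero_of_infinite_fibers (Nat.cast '' ({p | p.Prime} \ Set.Iic (P.degreeOf 0 + 1)))
    ((Nat.infinite_setOfPred_prime.sdiff (Set.finite_Iic _)).image Nat.cast_injective.injOn) ?_
  rintro _ ⟨p, ⟨hp, hlarge⟩, rfl⟩
  refine ⟨(Ico 1 p).image fun a : ℕ => exp (2 * Real.pi * I * a / p), ?_, ?_⟩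
  · rw [card_image_exp_two_pi_I_mul_div_Ico hp.ne_zero]
    simp only [Set.mem_Iic, not_le] at hlarge
    omega
  · simp only [mem_image, mem_Ico]
    rintro _ ⟨a, ⟨ha_pos, ha_lt⟩, rfl⟩
    have hcop : IsCoprime (a : ℤ) p := Nat.isCoprime_iff_coprime.2
      ((hp.coprime_iff_not_dvd.2 (Nat.not_dvd_of_pos_of_lt ha_pos ha_lt)).symm)
    simpa using h a p hcop
end
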